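/- Let X₁,…,X_n ∈ ℂ and let Y := median(Re X₁,…,Re X_n) + i·median(Im X₁,…,Im X_n), where the median of n reals is their ⌈n/2⌉-th largest element. Then for every a ∈ ℂ, |Y − a| ≤ 2·median(|X₁ − a|,…,|X_n − a|). -/

import Mathlib

/- STATEMENT 13: Let X₁,…,X_n ∈ ℂ and Y := median(Re X₁,…,Re X_n) + i·median(Im X₁,…,Im X_n),
   where the median of n reals is their ⌈n/2⌉-th largest element. Then for every a ∈ ℂ,
   |Y − a| ≤ 2·median(|X₁ − a|,…,|X_n − a|). -/

/-- the k-th largest element (1-indexed) of the values u₀,…,u_{m−1} -/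
noncomputable def kthLargest {m : ℕ} (u : Fin m → ℝ) (k : ℕ) : ℝ :=
  ((List.ofFn u).insertionSort (· ≤ ·)).getD (m - k) 0

/-- the median of m reals: their ⌈m/2⌉-th largest element -/
noncomputable def medianOf {m : ℕ} (u : Fin m → ℝ) : ℝ :=
  kthLargest u ⌈(m : ℝ) / 2⌉₊

/-!
Let `M` be the median of the distances `‖X i - a‖`. A strict majority of the indices satisfy
`‖X i - a‖ ≤ M`, and for each of them `Re X i` and `Im X i` lie within `M` of `Re a` and
`Im a`. A median lies in every interval that contains a strict majority of the values, so both
coordinates of `Y` lie within `M` of those of `a`, and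
`‖Y - a‖ ≤ |Re (Y - a)| + |Im (Y - a)| ≤ 2M`.
-/

open Finset

namespace List.SortedLE

variable {α : Type*} [LinearOrder α] {s : List α} {j : ℕ} {x : α}

theorem le_getElem_of_mem_take (hs : s.SortedLE) (hj : j < s.length) {y : α}
    (hy : y ∈ s.take (j + 1)) : y ≤ s[j] := by
  obtain ⟨i, hi, rfl⟩ := List.mem_iff_getElem.mp hy
  rw [List.length_take] at hi
  rw [List.getElem_take]
  exact hs.getElem_le_getElem_of_le (by omega)

theorem getElem_le_of_mem_drop (hs : s.SortedLE) (hj : j < s.length) {y : α}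
    (hy : y ∈ s.drop j) : s[j] ≤ y := by
  obtain ⟨i, hi, rfl⟩ := List.mem_iff_getElem.mp hy
  rw [List.getElem_drop]
  exact hs.getElem_le_getElem_of_le (Nat.le_add_right j i)

theorem countP_le_le_of_lt_getElem (hs : s.SortedLE) (hj : j < s.length) (hx : x < s[j]) :
    s.countP (· ≤ x) ≤ j := by
  have hdrop : (s.drop j).countP (· ≤ x) = 0 :=
    List.countP_eq_zero.mpr fun y hy => by
      simpa using hx.trans_le (hs.getElem_le_of_mem_drop hj hy)
  calc s.countP (· ≤ x) = (s.take j).countP (· ≤ x) + (s.drop j).countP (· ≤ x) := by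
        rw [← List.countP_append, List.take_append_drop]
    _ ≤ j := by rw [hdrop, add_zero]; exact List.countP_le_length.trans (by simp)

theorem countP_ge_le_of_getElem_lt (hs : s.SortedLE) (hj : j < s.length) (hx : s[j] < x) :
    s.countP (x ≤ ·) ≤ s.length - (j + 1) := by
  have htake : (s.take (j + 1)).countP (x ≤ ·) = 0 :=
    List.countP_eq_zero.mpr fun y hy => by
      simpa using (hs.le_getElem_of_mem_take hj hy).trans_lt hx
  calc s.countP (x ≤ ·)
        = (s.take (j + 1)).countP (x ≤ ·) + (s.drop (j + 1)).countP (x ≤ ·) := by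
        rw [← List.countP_append, List.take_append_drop]
    _ ≤ s.length - (j + 1) := by rw [htake, zero_add]; exact List.countP_le_length.trans (by simp)

theorem succ_le_countP_le_getElem (hs : s.SortedLE) (hj : j < s.length) :
    j + 1 ≤ s.countP (· ≤ s[j]) :=
  calc j + 1 = (s.take (j + 1)).countP (· ≤ s[j]) := by
        rw [List.countP_eq_length.mpr fun y hy => by simpa using hs.le_getElem_of_mem_take hj hy]
        rw [List.length_take]; omega
    _ ≤ s.countP (· ≤ s[j]) := (List.take_sublist _ _).countP_le

end List.SortedLE

section KthLargest

variable {m : ℕ} (u : Fin m → ℝ)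

noncomputable def sortedValues : List ℝ := (List.ofFn u).insertionSort (· ≤ ·)

theorem sortedLE_sortedValues : (sortedValues u).SortedLE := List.sortedLE_insertionSort

@[simp]
theorem length_sortedValues : (sortedValues u).length = m := by simp [sortedValues]

theorem countP_sortedValues (p : ℝ → Prop) [DecidablePred p] :
    (sortedValues u).countP (fun y => decide (p y)) = #{i | p (u i)} := by
  rw [sortedValues, (List.perm_insertionSort _ _).countP_eq, ← Multiset.coe_countP,
    ← Fin.univ_val_map, Multiset.countP_map, card_def, filter_val]

theorem kthLargest_eq_getElem {k : ℕ} (h : m - k < m) :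
    kthLargest u k = (sortedValues u)[m - k]'(by rwa [length_sortedValues]) := by
  rw [kthLargest, List.getD_eq_getElem?_getD, List.getElem?_eq_getElem]; rfl

variable {u} {k : ℕ} {x : ℝ} {S : Finset (Fin m)}

theorem kthLargest_le_of_card_le (hS : m - k + 1 ≤ #S) (h : ∀ i ∈ S, u i ≤ x) :
    kthLargest u k ≤ x := by
  have hm : m - k < m := by have := (card_le_univ S).trans_eq (Fintype.card_fin m); omega
  rw [kthLargest_eq_getElem u hm]
  by_contra! hx
  have hcount := (sortedLE_sortedValues u).countP_le_le_of_lt_getElem _ hx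
  rw [countP_sortedValues] at hcount
  have : #S ≤ #{i | u i ≤ x} := card_le_card fun i hi => by simpa using h i hi
  omega

theorem le_kthLargest_of_le_card (hk : 0 < k) (hS : k ≤ #S) (h : ∀ i ∈ S, x ≤ u i) :
    x ≤ kthLargest u k := by
  have hm : m - k < m := by have := (card_le_univ S).trans_eq (Fintype.card_fin m); omega
  rw [kthLargest_eq_getElem u hm]
  by_contra! hx
  have hcount := (sortedLE_sortedValues u).countP_ge_le_of_getElem_lt _ hx
  rw [countP_sortedValues, length_sortedValues] at hcount
  have : #S ≤ #{i | x ≤ u i} := card_le_card fun i hi => by simpa using h i hi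
  omega

theorem sub_add_one_le_card_le_kthLargest (hk : 0 < k) (hm : 0 < m) :
    m - k + 1 ≤ #{i | u i ≤ kthLargest u k} := by
  have hidx : m - k < m := by omega
  have hcount := (sortedLE_sortedValues u).succ_le_countP_le_getElem
    (by rwa [length_sortedValues])
  rwa [countP_sortedValues, ← kthLargest_eq_getElem u hidx] at hcount

end KthLargest

theorem Nat.ceil_natCast_div_two {R : Type*} [Field R] [LinearOrder R] [IsStrictOrderedRing R]
    [FloorSemiring R] (m : ℕ) : ⌈(m : R) / 2⌉₊ = (m + 1) / 2 := by
  apply le_antisymm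
  · rw [Nat.ceil_le, div_le_iff₀ two_pos]
    exact_mod_cast (by omega : m ≤ (m + 1) / 2 * 2)
  · have h := Nat.le_ceil ((m : R) / 2)
    rw [div_le_iff₀ two_pos] at h
    have : m ≤ ⌈(m : R) / 2⌉₊ * 2 := by exact_mod_cast h
    omega

section Median

variable {m : ℕ} {u : Fin m → ℝ}

theorem abs_medianOf_sub_le {S : Finset (Fin m)} {c r : ℝ} (hS : m < 2 * #S)
    (h : ∀ i ∈ S, |u i - c| ≤ r) : |medianOf u - c| ≤ r := by
  have hk : ⌈(m : ℝ) / 2⌉₊ = (m + 1) / 2 := Nat.ceil_natCast_div_two m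
  have hSm : #S ≤ m := (card_le_univ S).trans_eq (Fintype.card_fin m)
  rw [medianOf, abs_sub_le_iff, sub_le_iff_le_add', sub_le_comm]
  exact ⟨kthLargest_le_of_card_le (S := S) (by omega) fun i hi => by
      linarith [abs_le.mp (h i hi)],
    le_kthLargest_of_le_card (S := S) (by omega) (by omega) fun i hi => by
      linarith [abs_le.mp (h i hi)]⟩

theorem lt_two_mul_card_le_medianOf (hm : 0 < m) : m < 2 * #{i | u i ≤ medianOf u} := by
  have hk : ⌈(m : ℝ) / 2⌉₊ = (m + 1) / 2 := Nat.ceil_natCast_div_two m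
  have := sub_add_one_le_card_le_kthLargest (u := u) (k := ⌈(m : ℝ) / 2⌉₊) (by omega) hm
  rw [medianOf]; omega

end Median

theorem stmt13 {n : ℕ} (hn : 1 ≤ n) (X : Fin n → ℂ) (a : ℂ) :
    ‖(((medianOf (fun i => (X i).re) : ℝ) : ℂ) +
            Complex.I * ((medianOf (fun i => (X i).im) : ℝ) : ℂ) - a)‖
      ≤ 2 * medianOf (fun i => ‖X i - a‖) := by
  set M := medianOf fun i => ‖X i - a‖
  have hmaj := lt_two_mul_card_le_medianOf (u := fun i => ‖X i - a‖) hn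
  have hre : |medianOf (fun i => (X i).re) - a.re| ≤ M :=
    abs_medianOf_sub_le hmaj fun i hi =>
      (Complex.abs_re_le_norm (X i - a)).trans (mem_filter.mp hi).2
  have him : |medianOf (fun i => (X i).im) - a.im| ≤ M :=
    abs_medianOf_sub_le hmaj fun i hi =>
      (Complex.abs_im_le_norm (X i - a)).trans (mem_filter.mp hi).2
  calc _ ≤ |medianOf (fun i => (X i).re) - a.re| + |medianOf (fun i => (X i).im) - a.im| :=
        (Complex.norm_le_abs_re_add_abs_im _).trans_eq (by simp)
    _ ≤ 2 * M := by linarith
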